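/- Let 0 < ρ < 1. Then for all z, w in the open unit disk 𝔻 = {z ∈ ℂ : |z| < 1}, the double series Σ_{k=0}^{∞} Σ_{l=0}^{∞} ρ^{|l−k|} z^k conj(w)^l converges absolutely and equals (1 − ρ² z·conj(w)) / [ (1 − z·conj(w)) (1 − ρ z) (1 − ρ·conj(w)) ]. -/

import Mathlib

/-!
Split the index set `ℕ × ℕ` along the diagonal. On the upper triangle `l = k + m` the term
`ρ^|l-k| z^k v^l` equals `(z v)^k (ρ v)^m`, on the lower triangle `k = l + 1 + n` it equals
`ρ z (z v)^l (ρ z)^n`, so each half is a product of two geometric series and the two closed forms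
add up to `(1 - ρ² z v) / ((1 - z v)(1 - ρ z)(1 - ρ v))`. Absolute convergence is the same
identity for the norms `‖ρ‖, ‖z‖, ‖v‖` in `ℝ`.
-/

theorem HasSum.add_triangles {α : Type*} [AddCommMonoid α] [TopologicalSpace α]
    [ContinuousAdd α] {f : ℕ × ℕ → α} {a b : α}
    (ha : HasSum (fun p : ℕ × ℕ => f (p.1, p.1 + p.2)) a)
    (hb : HasSum (fun p : ℕ × ℕ => f (p.1 + 1 + p.2, p.1)) b) : HasSum f (a + b) := by
  have hupper : Function.Injective fun p : ℕ × ℕ => (p.1, p.1 + p.2) := by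
    intro p q h
    simp only [Prod.mk.injEq] at h
    ext <;> omega
  have hlower : Function.Injective fun p : ℕ × ℕ => (p.1 + 1 + p.2, p.1) := by
    intro p q h
    simp only [Prod.mk.injEq] at h
    ext <;> omega
  refine (hupper.hasSum_range_iff.2 ha).add_isCompl ?_ (hlower.hasSum_range_iff.2 hb)
  constructor
  · rw [Set.disjoint_left]
    rintro _ ⟨p, rfl⟩ ⟨q, hq⟩
    simp only [Prod.mk.injEq] at hq
    omega
  · rw [codisjoint_iff_le_sup]
    rintro ⟨k, l⟩ -
    rcases le_or_gt k l with hkl | hlk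
    · exact Or.inl ⟨(k, l - k), Prod.ext rfl (by dsimp only; omega)⟩
    · exact Or.inr ⟨(l, k - l - 1), Prod.ext (by dsimp only; omega) rfl⟩

section NormedField

variable {𝕜 : Type*} [NormedField 𝕜]

theorem hasSum_geometric_mul_geometric {a b : 𝕜} (ha : ‖a‖ < 1) (hb : ‖b‖ < 1) :
    HasSum (fun p : ℕ × ℕ => a ^ p.1 * b ^ p.2) ((1 - a)⁻¹ * (1 - b)⁻¹) :=
  (hasSum_geometric_of_norm_lt_one ha).mul (hasSum_geometric_of_norm_lt_one hb)
    (summable_mul_of_summable_norm' (summable_norm_geometric_of_norm_lt_one ha)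
      (summable_geometric_of_norm_lt_one ha) (summable_norm_geometric_of_norm_lt_one hb)
      (summable_geometric_of_norm_lt_one hb))

theorem one_sub_ne_zero_of_norm_lt_one {x : 𝕜} (hx : ‖x‖ < 1) : 1 - x ≠ 0 := by
  rw [sub_ne_zero]
  rintro rfl
  exact hx.ne norm_one

theorem hasSum_pow_natAbs_sub_mul_pow_mul_pow {ρ z v : 𝕜} (hzv : ‖z * v‖ < 1)
    (hρz : ‖ρ * z‖ < 1) (hρv : ‖ρ * v‖ < 1) :
    HasSum (fun p : ℕ × ℕ => ρ ^ ((p.2 : ℤ) - p.1).natAbs * z ^ p.1 * v ^ p.2)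
      ((1 - ρ ^ 2 * (z * v)) / ((1 - z * v) * (1 - ρ * z) * (1 - ρ * v))) := by
  set f : ℕ × ℕ → 𝕜 := fun p => ρ ^ ((p.2 : ℤ) - p.1).natAbs * z ^ p.1 * v ^ p.2
  have hupper : (fun p : ℕ × ℕ => f (p.1, p.1 + p.2))
      = fun p => (z * v) ^ p.1 * (ρ * v) ^ p.2 := by
    funext ⟨k, m⟩
    have hexp : (((k + m : ℕ) : ℤ) - k).natAbs = m := by omega
    simp only [f, hexp]
    ring
  have hlower : (fun p : ℕ × ℕ => f (p.1 + 1 + p.2, p.1))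
      = fun p => ρ * z * ((z * v) ^ p.1 * (ρ * z) ^ p.2) := by
    funext ⟨l, n⟩
    have hexp : ((l : ℤ) - (l + 1 + n : ℕ)).natAbs = n + 1 := by omega
    simp only [f, hexp]
    ring
  have hvalue : (1 - ρ ^ 2 * (z * v)) / ((1 - z * v) * (1 - ρ * z) * (1 - ρ * v))
      = (1 - z * v)⁻¹ * (1 - ρ * v)⁻¹ + ρ * z * ((1 - z * v)⁻¹ * (1 - ρ * z)⁻¹) := by
    have := one_sub_ne_zero_of_norm_lt_one hzv
    have := one_sub_ne_zero_of_norm_lt_one hρz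
    have := one_sub_ne_zero_of_norm_lt_one hρv
    field_simp
    ring
  rw [hvalue]
  exact HasSum.add_triangles (hupper ▸ hasSum_geometric_mul_geometric hzv hρv)
    (hlower ▸ (hasSum_geometric_mul_geometric hzv hρz).mul_left (ρ * z))

theorem summable_norm_pow_natAbs_sub_mul_pow_mul_pow {ρ z v : 𝕜} (hzv : ‖z * v‖ < 1)
    (hρz : ‖ρ * z‖ < 1) (hρv : ‖ρ * v‖ < 1) :
    Summable fun p : ℕ × ℕ => ‖ρ ^ ((p.2 : ℤ) - p.1).natAbs * z ^ p.1 * v ^ p.2‖ := by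
  have hnorm {a b : 𝕜} (h : ‖a * b‖ < 1) : ‖‖a‖ * ‖b‖‖ < 1 := by
    rwa [norm_mul, norm_norm, norm_norm, ← norm_mul]
  simp only [norm_mul, norm_pow]
  exact (hasSum_pow_natAbs_sub_mul_pow_mul_pow (hnorm hzv) (hnorm hρz) (hnorm hρv)).summable

end NormedField

theorem stmt_10 (ρ : ℝ) (hρ0 : 0 < ρ) (hρ1 : ρ < 1)
    (z w : ℂ) (hz : ‖z‖ < 1) (hw : ‖w‖ < 1) :
    Summable (fun p : ℕ × ℕ =>
      ‖((ρ ^ ((p.2 : ℤ) - (p.1 : ℤ)).natAbs : ℝ) : ℂ) * z ^ p.1 * ((starRingEnd ℂ) w) ^ p.2‖) ∧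
    ∑' p : ℕ × ℕ, ((ρ ^ ((p.2 : ℤ) - (p.1 : ℤ)).natAbs : ℝ) : ℂ) * z ^ p.1 * ((starRingEnd ℂ) w) ^ p.2
      = (1 - (ρ : ℂ) ^ 2 * (z * (starRingEnd ℂ) w)) /
        ((1 - z * (starRingEnd ℂ) w) * (1 - (ρ : ℂ) * z) * (1 - (ρ : ℂ) * (starRingEnd ℂ) w)) := by
  have hw' : ‖(starRingEnd ℂ) w‖ < 1 := by rwa [Complex.norm_conj]
  have hρ : ‖(ρ : ℂ)‖ = ρ := by rw [Complex.norm_real, Real.norm_of_nonneg hρ0.le]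
  have hzw : ‖z * (starRingEnd ℂ) w‖ < 1 := by
    rw [norm_mul]
    exact mul_lt_one_of_nonneg_of_lt_one_left (norm_nonneg z) hz hw'.le
  have hρz : ‖(ρ : ℂ) * z‖ < 1 := by
    rw [norm_mul, hρ]
    exact mul_lt_one_of_nonneg_of_lt_one_left hρ0.le hρ1 hz.le
  have hρw : ‖(ρ : ℂ) * (starRingEnd ℂ) w‖ < 1 := by
    rw [norm_mul, hρ]
    exact mul_lt_one_of_nonneg_of_lt_one_left hρ0.le hρ1 hw'.le
  simp only [Complex.ofReal_pow]
  exact ⟨summable_norm_pow_natAbs_sub_mul_pow_mul_pow hzw hρz hρw,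
    (hasSum_pow_natAbs_sub_mul_pow_mul_pow hzw hρz hρw).tsum_eq⟩
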